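/- Let k ≥ 1. If n = 2^{2k} - 1 - ∑_{r=0}^{k-2} ε_r·(3·2^{2r+1}) - β for some choice of ε_r ∈ {0,1} (for 0 ≤ r ≤ k-2) and β ∈ {0,2}, then S(n) = 2^k. -/

import Mathlib

/-- `inv2 n` is the number of inversions in the binary representation of `n`,
i.e. the number of pairs of bit positions `a > b` such that bit `a` of `n` is `1`
and bit `b` of `n` is `0`. -/
def inv2 (n : ℕ) : ℕ :=
  ((Finset.range (n + 1) ×ˢ Finset.range (n + 1)).filter
    (fun p => p.2 < p.1 ∧ n.testBit p.1 = true ∧ n.testBit p.2 = false)).card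

/-- `iSeq n = (-1)^(inv2 n)`. -/
def iSeq (n : ℕ) : ℤ := (-1) ^ inv2 n


/-- The summatory function `S N = ∑_{0 ≤ n ≤ N} iSeq n`. -/
def S (N : ℕ) : ℤ := ∑ n ∈ Finset.range (N + 1), iSeq n


/-- An integer `n` is of the special form for `k ≥ 1` if
`n = 2^(2k) - 1 - ∑_{r=0}^{k-2} ε_r (3 ⬝ 2^(2r+1)) - β` for some choice of
`ε_r ∈ {0,1}` and `β ∈ {0,2}`. -/
def IsSpecialForm (k : ℕ) (n : ℤ) : Prop :=
  ∃ ε : ℕ → ℤ, (∀ r, ε r = 0 ∨ ε r = 1) ∧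
    ∃ β : ℤ, (β = 0 ∨ β = 2) ∧
      n = 2 ^ (2 * k) - 1 - (∑ r ∈ Finset.range (k - 1), ε r * (3 * 2 ^ (2 * r + 1))) - β

/-!
With `t n = (-1) ^ popcount n` the Thue–Morse sign, appending a bit gives
`i (2n+1) = i n` and `i (2n) = i n * t n`; hence every block of four consecutive terms
`i (4n) + … + i (4n+3)` equals `2 * i n`, and `S (4m+3) = 2 * S m`.

For `β = 0` the special numbers of level `k+1` are `4m+3` and `4m-3`, with `m` special of level
`k`. Writing `m = 2q+1`, induction on `k` shows `t q = -1` and `S m = 2^k`: the case `4m+3` is the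
doubling formula, and for `4m-3 = 8q+1` the condition `t q = -1` makes the correction terms cancel.
The same condition gives `i (m-1) + i m = i q * (t q + 1) = 0`, so `S (m-2) = S m`, which is the
case `β = 2`.
-/

def inversionSet (n : ℕ) : Set (ℕ × ℕ) :=
  {p | p.2 < p.1 ∧ n.testBit p.1 = true ∧ n.testBit p.2 = false}

lemma coe_inv2_finset_eq_inversionSet (n : ℕ) :
    (((Finset.range (n + 1) ×ˢ Finset.range (n + 1)).filter
      (fun p => p.2 < p.1 ∧ n.testBit p.1 = true ∧ n.testBit p.2 = false) : Finset (ℕ × ℕ)) :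
      Set (ℕ × ℕ)) = inversionSet n := by
  ext ⟨a, b⟩
  simp only [Finset.coe_filter, Finset.mem_product, Finset.mem_range, inversionSet,
    Set.mem_ofPred_eq, and_iff_right_iff_imp]
  rintro ⟨hba, ha, -⟩
  have := Nat.ge_two_pow_of_testBit ha
  have := a.lt_two_pow_self
  omega

lemma inv2_eq_ncard (n : ℕ) : inv2 n = (inversionSet n).ncard := by
  rw [inv2, ← Set.ncard_coe_finset, coe_inv2_finset_eq_inversionSet]

lemma inversionSet_finite (n : ℕ) : (inversionSet n).Finite := by
  rw [← coe_inv2_finset_eq_inversionSet]; exact Finset.finite_toSet _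

lemma inversionSet_two_mul_add_one (n : ℕ) :
    inversionSet (2 * n + 1) = Prod.map (· + 1) (· + 1) '' inversionSet n := by
  ext ⟨a, b⟩
  rcases a with _ | a <;> rcases b with _ | b <;>
    simp [inversionSet, Nat.testBit_add_one, Nat.mul_add_div]

lemma inversionSet_two_mul (n : ℕ) :
    inversionSet (2 * n) = Prod.map (· + 1) (· + 1) '' inversionSet n ∪
      (fun a => (a + 1, 0)) '' {a | n.testBit a = true} := by
  ext ⟨a, b⟩
  rcases a with _ | a <;> rcases b with _ | b <;>
    simp [inversionSet, Nat.testBit_add_one]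

lemma setOf_testBit_eq_bitIndices (n : ℕ) :
    {a | n.testBit a = true} = ↑n.bitIndices.toFinset := by
  ext; simp

lemma inv2_two_mul_add_one (n : ℕ) : inv2 (2 * n + 1) = inv2 n := by
  rw [inv2_eq_ncard, inv2_eq_ncard, inversionSet_two_mul_add_one,
    Set.ncard_image_of_injective _
      (Prod.map_injective.2 ⟨add_left_injective 1, add_left_injective 1⟩)]

lemma inv2_two_mul (n : ℕ) : inv2 (2 * n) = inv2 n + n.bitIndices.length := by
  have hdisj : Disjoint (Prod.map (· + 1) (· + 1) '' inversionSet n)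
      ((fun a => (a + 1, 0)) '' {a | n.testBit a = true}) := by
    rw [Set.disjoint_left]; rintro _ ⟨⟨_, _⟩, -, rfl⟩ ⟨_, -, h⟩; simp at h
  rw [inv2_eq_ncard, inv2_eq_ncard, inversionSet_two_mul,
    Set.ncard_union_eq hdisj ((inversionSet_finite n).image _)
      (((setOf_testBit_eq_bitIndices n) ▸ Finset.finite_toSet _).image _),
    Set.ncard_image_of_injective _
      (Prod.map_injective.2 ⟨add_left_injective 1, add_left_injective 1⟩),
    Set.ncard_image_of_injective _ (fun a b h => by simpa using h), setOf_testBit_eq_bitIndices,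
    Set.ncard_coe_finset, List.toFinset_card_of_nodup Nat.bitIndices_nodup]

def thueMorse (n : ℕ) : ℤ := (-1) ^ n.bitIndices.length

@[simp] lemma thueMorse_two_mul (n : ℕ) : thueMorse (2 * n) = thueMorse n := by
  simp [thueMorse]

@[simp] lemma thueMorse_two_mul_add_one (n : ℕ) : thueMorse (2 * n + 1) = -thueMorse n := by
  simp [thueMorse, pow_succ]

lemma thueMorse_mul_self (n : ℕ) : thueMorse n * thueMorse n = 1 := by
  rw [thueMorse, ← mul_pow]; norm_num

@[simp] lemma iSeq_two_mul_add_one (n : ℕ) : iSeq (2 * n + 1) = iSeq n := by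
  rw [iSeq, inv2_two_mul_add_one, iSeq]

@[simp] lemma iSeq_two_mul (n : ℕ) : iSeq (2 * n) = iSeq n * thueMorse n := by
  rw [iSeq, inv2_two_mul, pow_add, iSeq, thueMorse]

lemma iSeq_four_mul_add_sum (n : ℕ) :
    iSeq (4 * n) + iSeq (4 * n + 1) + iSeq (4 * n + 2) + iSeq (4 * n + 3) = 2 * iSeq n := by
  have h0 : 4 * n = 2 * (2 * n) := by ring
  have h1 : 4 * n + 1 = 2 * (2 * n) + 1 := by ring
  have h2 : 4 * n + 2 = 2 * (2 * n + 1) := by ring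
  have h3 : 4 * n + 3 = 2 * (2 * n + 1) + 1 := by ring
  rw [h1, h2, h3, h0]
  simp only [iSeq_two_mul, iSeq_two_mul_add_one, thueMorse_two_mul, thueMorse_two_mul_add_one]
  linear_combination iSeq n * thueMorse_mul_self n

lemma S_succ (N : ℕ) : S (N + 1) = S N + iSeq (N + 1) := Finset.sum_range_succ _ _

lemma S_four_mul_add_three (m : ℕ) : S (4 * m + 3) = 2 * S m := by
  induction m with
  | zero => simp [S, Finset.sum_range_succ, ← iSeq_four_mul_add_sum 0]
  | succ m ih =>
    rw [show 4 * (m + 1) + 3 = 4 * m + 3 + 1 + 1 + 1 + 1 by ring, S_succ, S_succ, S_succ, S_succ,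
      ih, S_succ, mul_add, ← iSeq_four_mul_add_sum (m + 1)]
    ring_nf

lemma S_two_mul_add_three (p : ℕ) :
    S (2 * p + 3) = S (2 * p + 1) + iSeq (p + 1) * (thueMorse (p + 1) + 1) := by
  rw [S_succ, S_succ, show 2 * p + 1 + 1 = 2 * (p + 1) by ring, iSeq_two_mul,
    iSeq_two_mul_add_one]
  ring

lemma S_eight_mul_add_one {q : ℕ} (hq : thueMorse q = -1) :
    S (8 * q + 1) = 2 * S (2 * q + 1) := by
  have h := S_two_mul_add_three (4 * q)
  rw [show 2 * (4 * q) + 3 = 4 * (2 * q) + 3 by ring, S_four_mul_add_three,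
    show 2 * (4 * q) + 1 = 8 * q + 1 by ring,
    show 4 * q + 1 = 2 * (2 * q) + 1 by ring, iSeq_two_mul_add_one, iSeq_two_mul,
    thueMorse_two_mul_add_one, thueMorse_two_mul, hq] at h
  rw [S_succ (2 * q), iSeq_two_mul_add_one]
  linear_combination -h

def specialValue (k : ℕ) (ε : ℕ → ℤ) : ℤ :=
  2 ^ (2 * k) - 1 - ∑ r ∈ Finset.range (k - 1), ε r * (3 * 2 ^ (2 * r + 1))

lemma specialValue_succ_succ (k : ℕ) (ε : ℕ → ℤ) :
    specialValue (k + 2) ε = 4 * specialValue (k + 1) (fun r => ε (r + 1)) + 3 - 6 * ε 0 := by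
  have hterm (i : ℕ) :
      ε (i + 1) * (3 * 2 ^ (2 * (i + 1) + 1)) = 4 * (ε (i + 1) * (3 * 2 ^ (2 * i + 1))) := by ring
  rw [specialValue, specialValue, show k + 2 - 1 = k + 1 from rfl, Nat.add_sub_cancel,
    Finset.sum_range_succ']
  simp only [hterm, ← Finset.mul_sum]
  ring

lemma exists_specialValue_eq_two_mul_add_one (k : ℕ) (ε : ℕ → ℤ)
    (hε : ∀ r, ε r = 0 ∨ ε r = 1) :
    ∃ q : ℕ, specialValue (k + 1) ε = 2 * q + 1 ∧ thueMorse q = -1 ∧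
      S (2 * q + 1) = 2 ^ (k + 1) := by
  induction k generalizing ε with
  | zero =>
    refine ⟨1, by simp [specialValue], by simp [thueMorse], ?_⟩
    simpa [S, iSeq, inv2] using S_four_mul_add_three 0
  | succ k ih =>
    obtain ⟨q, hval, htm, hS⟩ := ih (fun r => ε (r + 1)) (fun r => hε (r + 1))
    rw [specialValue_succ_succ, hval]
    rcases hε 0 with h0 | h0 <;> rw [h0]
    · refine ⟨4 * q + 3, by push_cast; ring, ?_, ?_⟩
      · rw [show 4 * q + 3 = 2 * (2 * q + 1) + 1 by ring]; simp [htm]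
      · rw [show 2 * (4 * q + 3) + 1 = 4 * (2 * q + 1) + 3 by ring, S_four_mul_add_three, hS,
          pow_succ _ (k + 1)]
        ring
    · refine ⟨4 * q, by push_cast; ring, ?_, ?_⟩
      · rw [show 4 * q = 2 * (2 * q) by ring]; simp [htm]
      · rw [show 2 * (4 * q) + 1 = 8 * q + 1 by ring, S_eight_mul_add_one htm, hS,
          pow_succ _ (k + 1)]
        ring

theorem summatory_eq_of_specialForm (k : ℕ) (hk : 1 ≤ k) (n : ℕ)
    (h : IsSpecialForm k (n : ℤ)) : S n = 2 ^ k := by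
  obtain ⟨ε, hε, β, hβ, hn⟩ := h
  obtain ⟨k, rfl⟩ := Nat.exists_eq_add_of_le' hk
  obtain ⟨q, hval, htm, hS⟩ := exists_specialValue_eq_two_mul_add_one k ε hε
  change (n : ℤ) = specialValue (k + 1) ε - β at hn
  rcases hβ with rfl | rfl
  · rwa [show n = 2 * q + 1 by omega]
  · obtain ⟨p, rfl⟩ : ∃ p, q = p + 1 :=
      Nat.exists_eq_add_one.2 (Nat.pos_of_ne_zero (by rintro rfl; simp [thueMorse] at htm))
    rw [show n = 2 * p + 1 by omega, ← hS, show 2 * (p + 1) + 1 = 2 * p + 3 by ring,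
      S_two_mul_add_three, htm]
    ring
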